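/- Quantum lower Bogoliubov bound: Tr(ρ U) ≤ ΔF, where ρ = e^{−βH}/Tr(e^{−βH}), U = H − H₀, and ΔF = −β⁻¹ log(Z/Z₀). -/

import Mathlib

/-!
Let `V` diagonalise `A = -βH`, with eigenvalues `aᵢ`, and let `cᵢ` be the diagonal of `V* U V`;
then `Tr(ρU) = ∑ pᵢ cᵢ` for the Gibbs weights `pᵢ = e^{aᵢ}/Z`. In the basis `V` the matrix
`-βH₀ = A + βU` has diagonal `aᵢ + βcᵢ`, and the diagonal entries of a Hermitian matrix are averages
of its eigenvalues (weighted by the squared moduli of the entries of its eigenvector unitary), so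
Jensen's inequality for `exp` gives Peierls' inequality
`∑ e^{aᵢ + βcᵢ} ≤ Tr e^{-βH₀} = Z₀`. Jensen once more, now for the Gibbs weights, gives
`e^{β Tr(ρU)} ≤ ∑ pᵢ e^{βcᵢ} ≤ Z₀/Z`; take logarithms.
-/

namespace Real

theorem exp_gibbs_average_le {ι : Type*} [Fintype ι] [Nonempty ι] (a x : ι → ℝ) :
    exp ((∑ i, exp (a i) * x i) / ∑ i, exp (a i)) ≤
      (∑ i, exp (a i + x i)) / ∑ i, exp (a i) := by
  set Z := ∑ i, exp (a i)
  have hZ : 0 < Z := Finset.sum_pos (fun i _ => exp_pos _) Finset.univ_nonempty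
  have h := convexOn_exp.map_sum_le (t := Finset.univ) (w := fun i => exp (a i) / Z) (p := x)
    (fun i _ => by positivity) (by rw [← Finset.sum_div, div_self hZ.ne']) (fun i _ => trivial)
  simpa only [smul_eq_mul, div_mul_eq_mul_div, ← Finset.sum_div, ← exp_add] using h

theorem gibbs_average_le_of_sum_exp_le {ι : Type*} [Fintype ι] [Nonempty ι] {a c : ι → ℝ}
    {β Z₀ : ℝ} (hβ : 0 < β) (hZ₀ : ∑ i, exp (a i + β * c i) ≤ Z₀) :
    (∑ i, exp (a i) * c i) / ∑ i, exp (a i) ≤ -β⁻¹ * log ((∑ i, exp (a i)) / Z₀) := by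
  set Z := ∑ i, exp (a i)
  have hZ : 0 < Z := Finset.sum_pos (fun i _ => exp_pos _) Finset.univ_nonempty
  have hZ₀_pos : 0 < Z₀ :=
    (Finset.sum_pos (fun i _ => exp_pos _) Finset.univ_nonempty).trans_le hZ₀
  have hjensen : exp (β * ((∑ i, exp (a i) * c i) / Z)) ≤ Z₀ / Z :=
    calc exp (β * ((∑ i, exp (a i) * c i) / Z))
        = exp ((∑ i, exp (a i) * (β * c i)) / Z) := by
          rw [mul_div_assoc', Finset.mul_sum]; ring_nf
      _ ≤ (∑ i, exp (a i + β * c i)) / Z := exp_gibbs_average_le a (β * c ·)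
      _ ≤ Z₀ / Z := div_le_div_of_nonneg_right hZ₀ hZ.le
  rw [← le_log_iff_exp_le (div_pos hZ₀_pos hZ), log_div hZ₀_pos.ne' hZ.ne'] at hjensen
  rw [log_div hZ.ne' hZ₀_pos.ne',
    show -β⁻¹ * (log Z - log Z₀) = (log Z₀ - log Z) / β by ring, le_div_iff₀ hβ]
  linarith

end Real

namespace Matrix

variable {𝕜 n : Type*} [RCLike 𝕜] [Fintype n] [DecidableEq n]

theorem mul_diagonal_mul_star_apply_self (Q : Matrix n n 𝕜) (d : n → ℝ) (i : n) :
    (Q * diagonal (RCLike.ofReal ∘ d) * star Q : Matrix n n 𝕜) i i =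
      ((∑ j, ‖Q i j‖ ^ 2 * d j : ℝ) : 𝕜) := by
  rw [mul_apply]
  simp only [mul_diagonal, star_apply, RCLike.star_def, Function.comp_apply]
  push_cast
  refine Finset.sum_congr rfl fun j _ => ?_
  rw [mul_right_comm, RCLike.mul_conj, mul_comm]

theorem sum_norm_sq_apply_of_mem_unitaryGroup {Q : Matrix n n 𝕜} (hQ : Q ∈ unitaryGroup n 𝕜)
    (i : n) : ∑ j, ‖Q i j‖ ^ 2 = 1 := by
  have h := Q.mul_diagonal_mul_star_apply_self 1 i
  simp only [Pi.comp_one, map_one, Function.const_one, diagonal_one', mul_one,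
    mem_unitaryGroup_iff.mp hQ, one_apply_eq, Pi.one_apply, map_sum, map_pow] at h
  exact_mod_cast h.symm

theorem trace_exp_star_mul_mul {V : Matrix n n 𝕜} (hV : V ∈ unitaryGroup n 𝕜)
    (B : Matrix n n 𝕜) :
    (NormedSpace.exp (star V * B * V)).trace = (NormedSpace.exp B).trace := by
  have h := exp_units_conj' (Unitary.toUnits ⟨V, hV⟩) B
  simp only [Unitary.val_inv_toUnits_apply, UnitaryGroup.inv_val,
    Unitary.val_toUnits_apply] at h
  rw [h, trace_mul_cycle, mem_unitaryGroup_iff.mp hV, one_mul]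

namespace IsHermitian

variable {A : Matrix n n 𝕜}

theorem map_re_diag_le_re_diag_cfc (hA : A.IsHermitian) {f : ℝ → ℝ}
    (hf : ConvexOn ℝ Set.univ f) (i : n) : f (RCLike.re (A i i)) ≤ RCLike.re (cfc f A i i) := by
  set V : Matrix n n 𝕜 := (hA.eigenvectorUnitary : Matrix n n 𝕜)
  have hA_diag : A i i = ((∑ j, ‖V i j‖ ^ 2 * hA.eigenvalues j : ℝ) : 𝕜) := by
    conv_lhs => rw [hA.spectral_theorem, Unitary.conjStarAlgAut_apply]
    exact mul_diagonal_mul_star_apply_self V _ i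
  have hfA_diag : cfc f A i i = ((∑ j, ‖V i j‖ ^ 2 * f (hA.eigenvalues j) : ℝ) : 𝕜) := by
    rw [hA.cfc_eq, IsHermitian.cfc, Unitary.conjStarAlgAut_apply]
    exact mul_diagonal_mul_star_apply_self V (f ∘ hA.eigenvalues) i
  rw [hA_diag, hfA_diag, RCLike.ofReal_re, RCLike.ofReal_re]
  exact hf.map_sum_le (fun j _ => sq_nonneg _)
    (sum_norm_sq_apply_of_mem_unitaryGroup hA.eigenvectorUnitary.2 i) (fun j _ => trivial)

theorem trace_cfc_mul (hA : A.IsHermitian) (f : ℝ → ℝ) (X : Matrix n n 𝕜) :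
    (cfc f A * X).trace = ∑ i, (f (hA.eigenvalues i) : 𝕜) *
      (star (hA.eigenvectorUnitary : Matrix n n 𝕜) * X * hA.eigenvectorUnitary :
        Matrix n n 𝕜) i i := by
  rw [hA.cfc_eq, IsHermitian.cfc, Unitary.conjStarAlgAut_apply, mul_assoc, mul_assoc,
    trace_mul_comm, mul_assoc]
  simp [trace, diagonal_mul]

section Complex

open scoped Matrix.Norms.L2Operator

variable {A : Matrix n n ℂ}

theorem sum_exp_re_diag_le_re_trace_exp (hA : A.IsHermitian) :
    ∑ i, Real.exp (A i i).re ≤ (NormedSpace.exp A).trace.re := by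
  rw [← CFC.real_exp_eq_normedSpace_exp hA.isSelfAdjoint, trace, Complex.re_sum]
  exact Finset.sum_le_sum fun i _ => hA.map_re_diag_le_re_diag_cfc convexOn_exp i

theorem re_trace_exp_mul (hA : A.IsHermitian) (X : Matrix n n ℂ) :
    (NormedSpace.exp A * X).trace.re = ∑ i, Real.exp (hA.eigenvalues i) *
      ((star (hA.eigenvectorUnitary : Matrix n n ℂ) * X * hA.eigenvectorUnitary :
        Matrix n n ℂ) i i).re := by
  rw [← CFC.real_exp_eq_normedSpace_exp hA.isSelfAdjoint, hA.trace_cfc_mul, Complex.re_sum]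
  exact Finset.sum_congr rfl fun i _ => Complex.re_ofReal_mul _ _

theorem re_trace_exp (hA : A.IsHermitian) :
    (NormedSpace.exp A).trace.re = ∑ i, Real.exp (hA.eigenvalues i) := by
  rw [← mul_one (NormedSpace.exp A), hA.re_trace_exp_mul, mul_one,
    Unitary.coe_star_mul_self hA.eigenvectorUnitary]
  simp only [one_apply_eq, Complex.one_re, mul_one]

theorem sum_exp_eigenvalues_add_le_re_trace_exp_add {X : Matrix n n ℂ} (hA : A.IsHermitian)
    (hX : X.IsHermitian) (r : ℝ) :
    ∑ i, Real.exp (hA.eigenvalues i + r *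
      ((star (hA.eigenvectorUnitary : Matrix n n ℂ) * X * hA.eigenvectorUnitary :
        Matrix n n ℂ) i i).re) ≤ (NormedSpace.exp (A + r • X)).trace.re := by
  set V : Matrix n n ℂ := (hA.eigenvectorUnitary : Matrix n n ℂ)
  set N := star V * (A + r • X) * V
  have hN : N.IsHermitian :=
    isHermitian_conjTranspose_mul_mul V (hA.add (hX.smul (IsSelfAdjoint.all r)))
  have hA_diag : star V * A * V = diagonal (RCLike.ofReal ∘ hA.eigenvalues) := by
    simpa using hA.conjStarAlgAut_star_eigenvectorUnitary
  have hN_eq : N = diagonal (RCLike.ofReal ∘ hA.eigenvalues) + r • (star V * X * V) := by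
    rw [← hA_diag, ← Matrix.smul_mul, ← Matrix.mul_smul, ← add_mul, ← mul_add]
  have hN_diag : ∀ i, (N i i).re =
      hA.eigenvalues i + r * ((star V * X * V : Matrix n n ℂ) i i).re := by
    simp [hN_eq]
  calc _ = ∑ i, Real.exp (N i i).re := by simp only [hN_diag]
    _ ≤ (NormedSpace.exp N).trace.re := hN.sum_exp_re_diag_le_re_trace_exp
    _ = (NormedSpace.exp (A + r • X)).trace.re := by
        rw [trace_exp_star_mul_mul hA.eigenvectorUnitary.2]

end Complex

end IsHermitian

end Matrix

open Matrix

/-- Quantum lower Bogoliubov bound: `Tr(ρ U) ≤ ΔF = −β⁻¹ log(Z/Z₀)`, where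
`ρ = e^{−βH}/Tr(e^{−βH})` and `U = H − H₀`. -/
theorem quantum_bogoliubov_lower {m : ℕ} (β : ℝ) (hβ : 0 < β)
    (H H₀ U : Matrix (Fin m) (Fin m) ℂ)
    (hH : H.IsHermitian) (hH₀ : H₀.IsHermitian) (hU : U = H - H₀)
    (Z Z₀ : ℝ)
    (hZ : Z = (NormedSpace.exp (((-β : ℝ) : ℂ) • H)).trace.re)
    (hZ₀ : Z₀ = (NormedSpace.exp (((-β : ℝ) : ℂ) • H₀)).trace.re)
    (ρ : Matrix (Fin m) (Fin m) ℂ)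
    (hρ : ρ = ((Z : ℂ))⁻¹ • NormedSpace.exp (((-β : ℝ) : ℂ) • H)) :
    ((ρ * U).trace).re ≤ -β⁻¹ * Real.log (Z / Z₀) := by
  rcases isEmpty_or_nonempty (Fin m) with hm | hm
  · simp [hρ, hZ, hZ₀, trace]
  set A := ((-β : ℝ) : ℂ) • H
  have hA : A.IsHermitian := hH.smul (Complex.conj_ofReal _)
  set V : Matrix (Fin m) (Fin m) ℂ := (hA.eigenvectorUnitary : Matrix (Fin m) (Fin m) ℂ)
  set c := fun i => ((star V * U * V : Matrix (Fin m) (Fin m) ℂ) i i).re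
  have hρU : (ρ * U).trace.re = (∑ i, Real.exp (hA.eigenvalues i) * c i) / Z := by
    rw [hρ, smul_mul, trace_smul, smul_eq_mul, ← Complex.ofReal_inv, Complex.re_ofReal_mul,
      hA.re_trace_exp_mul, inv_mul_eq_div]
  have hH₀_eq : ((-β : ℝ) : ℂ) • H₀ = A + β • U := by
    simp only [A, hU, ← Complex.coe_smul]
    module
  have hpeierls : ∑ i, Real.exp (hA.eigenvalues i + β * c i) ≤ Z₀ := by
    rw [hZ₀, hH₀_eq]
    exact hA.sum_exp_eigenvalues_add_le_re_trace_exp_add (hU ▸ hH.sub hH₀) β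
  rw [hρU, hZ, hA.re_trace_exp]
  exact Real.gibbs_average_le_of_sum_exp_le hβ hpeierls
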